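/- arXiv:1806.09086 — 4 statements merged into one kernel-verified Lean document; each statement's English description precedes it below -/
import Mathlib

section
/- Let n ≥ 1 and let f : ℝⁿ → ℝⁿ be defined on the open unit ball by f(x) = (1 - ‖x‖²)^{-1/2} x. Then for every x ∈ ℝⁿ with ‖x‖ < 1, the map f is differentiable at x and the absolute value of the determinant of its derivative at x equals (1 - ‖x‖²)^{-(n/2 + 1)}. -/
/-!
The derivative of `y ↦ (1 - ‖y‖²)^p • y` at `x` is the scalar map `(1 - ‖x‖²)^p • 1` plus the
rank-one map `v ↦ -2p (1 - ‖x‖²)^(p-1) ⟪x, v⟫ x`, so by the matrix determinant lemma its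
determinant is `(1 - ‖x‖²)^(p n - 1) (1 - (1 + 2p) ‖x‖²)`. For `p = -1/2` the last factor is `1`.
-/

open Module

namespace LinearMap

variable {R M : Type*} [CommRing R] [AddCommGroup M] [Module R M] [Free R M] [Module.Finite R M]

theorem det_one_add_smulRight (φ : Dual R M) (w : M) :
    LinearMap.det (1 + φ.smulRight w) = 1 + φ w := by
  set b := Free.chooseBasis R M
  have hmat : toMatrix b b (1 + φ.smulRight w) =
      1 + Matrix.replicateCol Unit (b.repr w) * Matrix.replicateRow Unit (fun j => φ (b j)) := by
    ext i j
    simp [toMatrix_apply, Matrix.one_apply, Finsupp.single_apply, Matrix.mul_apply, eq_comm,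
      mul_comm]
  rw [← det_toMatrix b, hmat, Matrix.det_one_add_replicateCol_mul_replicateRow]
  congr 1
  conv_rhs => rw [← b.sum_repr w, map_sum]
  simp only [dotProduct, map_smul, smul_eq_mul, mul_comm]

theorem det_smul_one_add_smulRight {K V : Type*} [Field K] [AddCommGroup V] [Module K V]
    [FiniteDimensional K V] {a : K} (ha : a ≠ 0) (φ : Dual K V) (w : V) :
    LinearMap.det (a • 1 + φ.smulRight w) = a ^ finrank K V * (1 + a⁻¹ * φ w) := by
  have : a • 1 + φ.smulRight w = a • (1 + (a⁻¹ • φ).smulRight w) := by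
    ext v; simp [smul_smul, ha]
  rw [this, det_smul, det_one_add_smulRight, smul_apply, smul_eq_mul]

end LinearMap

section

variable {E : Type*} [NormedAddCommGroup E] [InnerProductSpace ℝ E]

theorem hasFDerivAt_one_sub_norm_sq_rpow_smul (p : ℝ) {x : E} (hx : ‖x‖ ≠ 1) :
    HasFDerivAt (fun y : E => (1 - ‖y‖ ^ 2) ^ p • y)
      ((1 - ‖x‖ ^ 2) ^ p • ContinuousLinearMap.id ℝ E
        + ((-2 * p * (1 - ‖x‖ ^ 2) ^ (p - 1)) • innerSL ℝ x).smulRight x) x := by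
  have ht : 1 - ‖x‖ ^ 2 ≠ 0 := by
    rw [sub_ne_zero, ne_comm]
    exact mt (pow_eq_one_iff_of_nonneg (norm_nonneg x) two_ne_zero).mp hx
  refine ((((hasFDerivAt_const 1 x).sub (hasStrictFDerivAt_norm_sq x).hasFDerivAt).rpow_const
    (.inl ht)).smul (hasFDerivAt_id x)).congr_fderiv ?_
  ext y
  simp only [Pi.sub_apply, zero_sub, smul_neg, id_eq, add_apply, smul_apply,
    ContinuousLinearMap.id_apply, ContinuousLinearMap.smulRight_apply, neg_apply,
    coe_innerSL_apply, nsmul_eq_mul, Nat.cast_ofNat, smul_eq_mul, neg_smul, neg_mul]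
  module

theorem det_fderiv_one_sub_norm_sq_rpow_smul [FiniteDimensional ℝ E] (p : ℝ) {x : E}
    (hx : ‖x‖ < 1) :
    (fderiv ℝ (fun y : E => (1 - ‖y‖ ^ 2) ^ p • y) x).det
      = (1 - ‖x‖ ^ 2) ^ (p * finrank ℝ E - 1) * (1 - (1 + 2 * p) * ‖x‖ ^ 2) := by
  have ht : 0 < 1 - ‖x‖ ^ 2 := sub_pos.2 (pow_lt_one₀ (norm_nonneg x) hx two_ne_zero)
  rw [(hasFDerivAt_one_sub_norm_sq_rpow_smul p hx.ne).fderiv, ContinuousLinearMap.det,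
    ContinuousLinearMap.toLinearMap_add, ContinuousLinearMap.toLinearMap_smul,
    ContinuousLinearMap.coe_id, ContinuousLinearMap.coe_smulRight, ← Module.End.one_eq_id,
    LinearMap.det_smul_one_add_smulRight (Real.rpow_pos_of_pos ht p).ne']
  simp only [ContinuousLinearMap.coe_coe, FunLike.coe_smul, Pi.smul_apply,
    innerSL_apply_apply, real_inner_self_eq_norm_sq, smul_eq_mul]
  rw [← Real.rpow_mul_natCast ht.le, Real.rpow_sub_one ht.ne', Real.rpow_sub_one ht.ne']
  field_simp
  ring

end

theorem stmt0_general (n : ℕ)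
    (f : EuclideanSpace ℝ (Fin n) → EuclideanSpace ℝ (Fin n))
    (hf : ∀ x, f x = ((1 - ‖x‖ ^ 2) ^ (-(1 / 2 : ℝ))) • x) :
    ∀ x : EuclideanSpace ℝ (Fin n), ‖x‖ < 1 →
      DifferentiableAt ℝ f x ∧
        |(fderiv ℝ f x).det| = (1 - ‖x‖ ^ 2) ^ (-((n : ℝ) / 2 + 1)) := by
  obtain rfl : f = fun y => (1 - ‖y‖ ^ 2) ^ (-(1 / 2 : ℝ)) • y := funext hf
  intro x hx
  refine ⟨(hasFDerivAt_one_sub_norm_sq_rpow_smul _ hx.ne).differentiableAt, ?_⟩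
  have ht : 0 < 1 - ‖x‖ ^ 2 := sub_pos.2 (pow_lt_one₀ (norm_nonneg x) hx two_ne_zero)
  rw [det_fderiv_one_sub_norm_sq_rpow_smul _ hx, finrank_euclideanSpace_fin]
  norm_num [abs_of_pos (Real.rpow_pos_of_pos ht _)]
  ring_nf

/-- For `n ≥ 1` and `f x = (1 - ‖x‖²)^(-1/2) • x` on the open unit ball of `ℝⁿ`,
`f` is differentiable at every `x` with `‖x‖ < 1`, and the absolute value of the
determinant of its derivative there equals `(1 - ‖x‖²)^(-(n/2 + 1))`. -/
theorem stmt0 (n : ℕ) (hn : 1 ≤ n)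
    (f : EuclideanSpace ℝ (Fin n) → EuclideanSpace ℝ (Fin n))
    (hf : ∀ x, f x = ((1 - ‖x‖ ^ 2) ^ (-(1 / 2 : ℝ))) • x) :
    ∀ x : EuclideanSpace ℝ (Fin n), ‖x‖ < 1 →
      DifferentiableAt ℝ f x ∧
        |(fderiv ℝ f x).det| = (1 - ‖x‖ ^ 2) ^ (-((n : ℝ) / 2 + 1)) :=
  stmt0_general n f hf
end

section
/- Let k ≥ 1, let α₁, …, α_k > 0 be real numbers with A = α₁ + ⋯ + α_k, and let h : [0, ∞) → [0, ∞] be measurable. Then ∫_{(0,∞)^k} (∏_{i=1}^k u_i^{α_i - 1}) · h(u₁ + ⋯ + u_k) du = (∏_{i=1}^k Γ(α_i) / Γ(A)) · ∫₀^∞ z^{A - 1} h(z) dz, where the left integral is with respect to k-dimensional Lebesgue measure on (0,∞)^k. -/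
/-!
Induction on `k`, peeling off the first coordinate. The step is the two-variable case
`∫∫ x^(a-1) y^(b-1) h(x+y) = B(a,b) ∫ z^(a+b-1) h(z)`: substitute `z = x + y`, swap the order
of integration over the triangle `0 < x < z`, and evaluate the inner integral
`∫₀^z x^(a-1) (z-x)^(b-1) dx = z^(a+b-1) Γ(a)Γ(b)/Γ(a+b)` as a scaled Beta integral.
-/

open MeasureTheory Set
open scoped ENNReal

section Beta

variable {a b z : ℝ}

theorem Complex.betaIntegral_ofReal (ha : 0 < a) (hb : 0 < b) :
    Complex.betaIntegral a b =
      ((Real.Gamma a * Real.Gamma b / Real.Gamma (a + b) : ℝ) : ℂ) := by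
  have hΓ : (Real.Gamma (a + b) : ℂ) ≠ 0 :=
    Complex.ofReal_ne_zero.2 (Real.Gamma_pos_of_pos (add_pos ha hb)).ne'
  have key := Complex.Gamma_mul_Gamma_eq_betaIntegral (s := a) (t := b)
    (by simpa using ha) (by simpa using hb)
  rw [← Complex.ofReal_add, Complex.Gamma_ofReal, Complex.Gamma_ofReal,
    Complex.Gamma_ofReal] at key
  push_cast
  rw [eq_div_iff hΓ, mul_comm, key]

theorem integral_rpow_mul_sub_rpow (ha : 0 < a) (hb : 0 < b) (hz : 0 < z) :
    ∫ x in (0 : ℝ)..z, x ^ (a - 1) * (z - x) ^ (b - 1) =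
      z ^ (a + b - 1) * (Real.Gamma a * Real.Gamma b / Real.Gamma (a + b)) := by
  have hcast : ∫ x in (0 : ℝ)..z, ((x ^ (a - 1) * (z - x) ^ (b - 1) : ℝ) : ℂ) =
      ∫ x in (0 : ℝ)..z, (x : ℂ) ^ ((a : ℂ) - 1) * ((z : ℂ) - x) ^ ((b : ℂ) - 1) := by
    refine intervalIntegral.integral_congr fun x hx => ?_
    rw [uIcc_of_le hz.le] at hx
    push_cast
    rw [Complex.ofReal_cpow hx.1, Complex.ofReal_cpow (sub_nonneg.2 hx.2)]
    push_cast
    ring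
  apply Complex.ofReal_injective
  rw [← intervalIntegral.integral_ofReal, hcast, Complex.betaIntegral_scaled _ _ hz,
    Complex.betaIntegral_ofReal ha hb, Complex.ofReal_mul, Complex.ofReal_cpow hz.le]
  push_cast
  ring

theorem intervalIntegrable_rpow_mul_sub_rpow (ha : 0 < a) (hb : 0 < b) (hz : 0 < z) :
    IntervalIntegrable (fun x => x ^ (a - 1) * (z - x) ^ (b - 1)) volume 0 z := by
  have hleft : IntervalIntegrable (fun x => x ^ (a - 1) * (z - x) ^ (b - 1)) volume 0 (z / 2) := by
    refine (intervalIntegral.intervalIntegrable_rpow' (by linarith)).mul_continuousOn ?_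
    refine (continuous_const.sub continuous_id).continuousOn.rpow_const fun x hx => ?_
    rw [uIcc_of_le (by linarith)] at hx
    exact Or.inl (ne_of_gt (show 0 < z - x by linarith [hx.2]))
  have hright : IntervalIntegrable (fun x => x ^ (a - 1) * (z - x) ^ (b - 1)) volume (z / 2) z := by
    refine IntervalIntegrable.continuousOn_mul ?_ ?_
    · have := (intervalIntegral.intervalIntegrable_rpow' (r := b - 1) (a := 0) (b := z / 2)
        (by linarith)).comp_sub_left z
      rw [show z - z / 2 = z / 2 by ring, sub_zero] at this
      exact this.symm
    · refine continuous_id.continuousOn.rpow_const fun x hx => ?_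
      rw [uIcc_of_le (by linarith)] at hx
      exact Or.inl (ne_of_gt (show 0 < x by linarith [hx.1]))
  exact hleft.trans hright

theorem setLIntegral_Ioo_rpow_mul_sub_rpow (ha : 0 < a) (hb : 0 < b) (hz : 0 < z) :
    ∫⁻ x in Ioo 0 z, ENNReal.ofReal (x ^ (a - 1) * (z - x) ^ (b - 1)) =
      ENNReal.ofReal (z ^ (a + b - 1) * (Real.Gamma a * Real.Gamma b / Real.Gamma (a + b))) := by
  have hint : IntegrableOn (fun x => x ^ (a - 1) * (z - x) ^ (b - 1)) (Ioo 0 z) :=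
    (intervalIntegrable_rpow_mul_sub_rpow ha hb hz).1.mono_set Ioo_subset_Ioc_self
  have hnonneg : 0 ≤ᵐ[volume.restrict (Ioo 0 z)] fun x => x ^ (a - 1) * (z - x) ^ (b - 1) := by
    filter_upwards [ae_restrict_mem measurableSet_Ioo] with x hx
    exact mul_nonneg (Real.rpow_nonneg hx.1.le _) (Real.rpow_nonneg (sub_nonneg.2 hx.2.le) _)
  rw [← ofReal_integral_eq_lintegral_ofReal hint hnonneg, ← integral_Ioc_eq_integral_Ioo,
    ← intervalIntegral.integral_of_le hz.le, integral_rpow_mul_sub_rpow ha hb hz]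

end Beta

theorem setLIntegral_Ioi_comp_add_left (g : ℝ → ℝ≥0∞) (x : ℝ) :
    ∫⁻ y in Ioi 0, g (x + y) = ∫⁻ z in Ioi x, g z := by
  have H := (measurePreserving_add_left volume x).setLIntegral_comp_emb
    (MeasurableEquiv.addLeft x).measurableEmbedding g (Ioi 0)
  rwa [image_const_add_Ioi, add_zero] at H

theorem lintegral_Ioi_lintegral_Ioi_swap {f : ℝ → ℝ → ℝ≥0∞}
    (hf : Measurable (Function.uncurry f)) (a : ℝ) :
    ∫⁻ x in Ioi a, ∫⁻ y in Ioi x, f x y = ∫⁻ y in Ioi a, ∫⁻ x in Ioo a y, f x y := by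
  set T : Set (ℝ × ℝ) := {p | a < p.1 ∧ p.1 < p.2}
  have hT : MeasurableSet T :=
    (measurableSet_lt measurable_const measurable_fst).inter
      (measurableSet_lt measurable_fst measurable_snd)
  have hleft : ∀ x, (Ioi a).indicator (fun x => ∫⁻ y in Ioi x, f x y) x =
      ∫⁻ y, T.indicator (Function.uncurry f) (x, y) := by
    intro x
    by_cases hx : x ∈ Ioi a
    · rw [indicator_of_mem hx, ← lintegral_indicator measurableSet_Ioi]
      congr 1 with y
      simp [T, indicator_apply, mem_Ioi.1 hx]
    · have hxT : ∀ y, (x, y) ∉ T := fun y hxy => hx hxy.1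
      simp [indicator_of_notMem hx, indicator_of_notMem (hxT _)]
  have hright : ∀ y, (Ioi a).indicator (fun y => ∫⁻ x in Ioo a y, f x y) y =
      ∫⁻ x, T.indicator (Function.uncurry f) (x, y) := by
    intro y
    by_cases hy : y ∈ Ioi a
    · rw [indicator_of_mem hy, ← lintegral_indicator measurableSet_Ioo]
      rfl
    · have hyT : ∀ x, (x, y) ∉ T := fun x hxy => hy (hxy.1.trans hxy.2)
      simp [indicator_of_notMem hy, indicator_of_notMem (hyT _)]
  rw [← lintegral_indicator measurableSet_Ioi, ← lintegral_indicator measurableSet_Ioi]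
  simp_rw [hleft, hright]
  exact lintegral_lintegral_swap (hf.indicator hT).aemeasurable

theorem lintegral_Ioi_rpow_mul_lintegral_Ioi_rpow_mul_add {a b : ℝ} (ha : 0 < a) (hb : 0 < b)
    {h : ℝ → ℝ≥0∞} (hh : Measurable h) :
    ∫⁻ x in Ioi 0, ENNReal.ofReal (x ^ (a - 1)) *
        ∫⁻ y in Ioi 0, ENNReal.ofReal (y ^ (b - 1)) * h (x + y) =
      ENNReal.ofReal (Real.Gamma a * Real.Gamma b / Real.Gamma (a + b)) *
        ∫⁻ z in Ioi 0, ENNReal.ofReal (z ^ (a + b - 1)) * h z := by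
  set B := Real.Gamma a * Real.Gamma b / Real.Gamma (a + b)
  calc ∫⁻ x in Ioi 0, ENNReal.ofReal (x ^ (a - 1)) *
        ∫⁻ y in Ioi 0, ENNReal.ofReal (y ^ (b - 1)) * h (x + y)
      = ∫⁻ x in Ioi 0, ∫⁻ z in Ioi x,
          ENNReal.ofReal (x ^ (a - 1) * (z - x) ^ (b - 1)) * h z := by
        refine setLIntegral_congr_fun measurableSet_Ioi fun x hx => ?_
        have htranslate :=
          setLIntegral_Ioi_comp_add_left (fun z => ENNReal.ofReal ((z - x) ^ (b - 1)) * h z) x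
        simp only [add_sub_cancel_left] at htranslate
        rw [htranslate, ← lintegral_const_mul' _ _ ENNReal.ofReal_ne_top]
        refine setLIntegral_congr_fun measurableSet_Ioi fun z _ => ?_
        rw [ENNReal.ofReal_mul (Real.rpow_nonneg (le_of_lt hx) _), mul_assoc]
    _ = ∫⁻ z in Ioi 0, ∫⁻ x in Ioo 0 z,
          ENNReal.ofReal (x ^ (a - 1) * (z - x) ^ (b - 1)) * h z :=
        lintegral_Ioi_lintegral_Ioi_swap (by fun_prop) 0
    _ = ∫⁻ z in Ioi 0, ENNReal.ofReal B * (ENNReal.ofReal (z ^ (a + b - 1)) * h z) := by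
        refine setLIntegral_congr_fun measurableSet_Ioi fun z hz => ?_
        rw [lintegral_mul_const _ (by fun_prop), setLIntegral_Ioo_rpow_mul_sub_rpow ha hb hz,
          ENNReal.ofReal_mul (Real.rpow_nonneg (le_of_lt hz) _)]
        ring
    _ = ENNReal.ofReal B * ∫⁻ z in Ioi 0, ENNReal.ofReal (z ^ (a + b - 1)) * h z :=
        lintegral_const_mul' _ _ ENNReal.ofReal_ne_top

theorem lintegral_pi_fin_succ {X : Type*} [MeasurableSpace X] (μ : Measure X) [SigmaFinite μ]
    {n : ℕ} {F : (Fin (n + 1) → X) → ℝ≥0∞} (hF : Measurable F) :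
    ∫⁻ u, F u ∂(Measure.pi fun _ => μ) =
      ∫⁻ x, ∫⁻ v, F (Fin.cons x v) ∂(Measure.pi fun _ => μ) ∂μ := by
  let e := (MeasurableEquiv.piFinSuccAbove (fun _ : Fin (n + 1) => X) 0).symm
  rw [← (measurePreserving_piFinSuccAbove (fun _ => μ) 0).symm.lintegral_comp_emb
      e.measurableEmbedding, lintegral_prod (fun p => F (e p)) (hF.comp e.measurable).aemeasurable]
  simp only [e, MeasurableEquiv.piFinSuccAbove_symm_apply, Fin.insertNthEquiv_zero]
  rfl

theorem lintegral_pi_Ioi_prod_rpow_mul_comp_sum {n : ℕ} {α : Fin (n + 1) → ℝ}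
    (hα : ∀ i, 0 < α i) {h : ℝ → ℝ≥0∞} (hh : Measurable h) :
    ∫⁻ u, (∏ i, ENNReal.ofReal (u i ^ (α i - 1))) * h (∑ i, u i)
        ∂(Measure.pi fun _ => volume.restrict (Ioi 0)) =
      ENNReal.ofReal ((∏ i, Real.Gamma (α i)) / Real.Gamma (∑ i, α i)) *
        ∫⁻ z in Ioi 0, ENNReal.ofReal (z ^ (∑ i, α i - 1)) * h z := by
  induction n generalizing h with
  | zero =>
    have hΓ : Real.Gamma (α 0) ≠ 0 := (Real.Gamma_pos_of_pos (hα 0)).ne'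
    have hcomp :=
      (measurePreserving_funUnique (volume.restrict (Ioi (0 : ℝ))) (Fin 1)).lintegral_comp_emb
        (MeasurableEquiv.funUnique (Fin 1) ℝ).measurableEmbedding
        fun x => ENNReal.ofReal (x ^ (α 0 - 1)) * h x
    simp only [Nat.reduceAdd, Finset.univ_unique, Fin.default_eq_zero, Finset.prod_singleton,
      Finset.sum_singleton, div_self hΓ, ENNReal.ofReal_one, one_mul]
    exact hcomp
  | succ n ih =>
    rw [lintegral_pi_fin_succ _ (by fun_prop)]
    simp only [Fin.prod_univ_succ (n := n + 1), Fin.sum_univ_succ (n := n + 1), Fin.cons_zero,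
      Fin.cons_succ, mul_assoc]
    set A' := ∑ i : Fin (n + 1), α i.succ
    have hA' : 0 < A' := Finset.sum_pos (fun i _ => hα i.succ) Finset.univ_nonempty
    have hΓA' : 0 < Real.Gamma A' := Real.Gamma_pos_of_pos hA'
    set C' := (∏ i : Fin (n + 1), Real.Gamma (α i.succ)) / Real.Gamma A'
    have hC' : 0 ≤ C' :=
      div_nonneg (Finset.prod_nonneg fun j _ => (Real.Gamma_pos_of_pos (hα j.succ)).le) hΓA'.le
    calc ∫⁻ x in Ioi (0 : ℝ), ∫⁻ v : Fin (n + 1) → ℝ, ENNReal.ofReal (x ^ (α 0 - 1)) *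
            ((∏ j, ENNReal.ofReal (v j ^ (α j.succ - 1))) * h (x + ∑ j, v j))
            ∂(Measure.pi fun _ => volume.restrict (Ioi (0 : ℝ)))
        = ∫⁻ x in Ioi (0 : ℝ), ENNReal.ofReal C' * (ENNReal.ofReal (x ^ (α 0 - 1)) *
            ∫⁻ y in Ioi 0, ENNReal.ofReal (y ^ (A' - 1)) * h (x + y)) := by
          refine lintegral_congr fun x => ?_
          rw [lintegral_const_mul' _ _ ENNReal.ofReal_ne_top,
            ih (h := fun y => h (x + y)) (fun j => hα j.succ) (by fun_prop), mul_left_comm]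
      _ = ENNReal.ofReal C' * (ENNReal.ofReal (Real.Gamma (α 0) * Real.Gamma A' /
            Real.Gamma (α 0 + A')) * ∫⁻ z in Ioi 0, ENNReal.ofReal (z ^ (α 0 + A' - 1)) * h z) := by
          rw [lintegral_const_mul' _ _ ENNReal.ofReal_ne_top,
            lintegral_Ioi_rpow_mul_lintegral_Ioi_rpow_mul_add (hα 0) hA' hh]
      _ = _ := by
          rw [← mul_assoc, ← ENNReal.ofReal_mul hC']
          congr 2
          simp only [C']
          field_simp

/-- Dirichlet-type integral: for `α₁, …, α_k > 0` with `A = Σ αᵢ` and measurable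
`h : [0,∞) → [0,∞]`,
`∫_{(0,∞)^k} (∏ uᵢ^{αᵢ-1}) h(Σ uᵢ) du = (∏ Γ(αᵢ)/Γ(A)) ∫₀^∞ z^{A-1} h(z) dz`. -/
theorem stmt7 (k : ℕ) (hk : 1 ≤ k) (α : Fin k → ℝ) (hα : ∀ i, 0 < α i)
    (A : ℝ) (hA : A = ∑ i, α i) (h : ℝ → ℝ≥0∞) (hh : Measurable h) :
    ∫⁻ u : Fin k → ℝ in Set.univ.pi (fun _ : Fin k => Set.Ioi (0 : ℝ)),
        (∏ i, ENNReal.ofReal ((u i) ^ (α i - 1))) * h (∑ i, u i) =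
      ENNReal.ofReal ((∏ i, Real.Gamma (α i)) / Real.Gamma A) *
        ∫⁻ z in Set.Ioi (0 : ℝ), ENNReal.ofReal (z ^ (A - 1)) * h z := by
  obtain ⟨n, rfl⟩ := Nat.exists_eq_add_of_le' hk
  rw [hA, volume_pi, Measure.restrict_pi_pi]
  exact lintegral_pi_Ioi_prod_rpow_mul_comp_sum hα hh
end

section
/- Let k ≥ 2, let n₀, n₁, …, n_k ≥ 1 be integers with m = n₁ + ⋯ + n_k and n* = n₀ + n₁ + ⋯ + n_k, and let β₁, …, β_k > 0. Then for all t₁ ∈ ℝ^{n₁}, …, t_{k-1} ∈ ℝ^{n_{k-1}}: ∫_{ℝ^{n_k}} Γ(n*/2)(∏_{i=1}^k β_i^{-n_i/2})/(Γ(n₀/2) π^{m/2}) · (1 + Σ_{i=1}^k β_i^{-1}‖t_i‖²)^{-n*/2} dt_k = Γ((n* - n_k)/2)(∏_{i=1}^{k-1} β_i^{-n_i/2})/(Γ(n₀/2) π^{(m - n_k)/2}) · (1 + Σ_{i=1}^{k-1} β_i^{-1}‖t_i‖²)^{-(n* - n_k)/2}. That is, if (t₁,…,t_k) follows the multivector variate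 t distribution with parameters (n₀,…,n_k; β₁,…,β_k), then the subvector (t₁,…,t_{k-1}) follows the multivector variate t distribution with parameters (n₀,…,n_{k-1}; β₁,…,β_{k-1}). -/
/-!
Integrating out the last block reduces to the radial integral
`∫_{ℝ^d} (a + b‖x‖²)^(-s) dx = (π/b)^(d/2) Γ(s - d/2) / Γ(s) · a^(d/2 - s)` with
`a = 1 + Σ_{i<k} β_i⁻¹‖t_i‖²`, `b = β_k⁻¹`, `s = n*/2`, `d = n_k`. This follows by Gamma
subordination: `Γ(s) r^(-s) = ∫₀^∞ t^(s-1) e^(-rt) dt`; after Tonelli the inner integral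
over `ℝ^d` is Gaussian, `(π/(bt))^(d/2)`, and the remaining `t`-integral is again a Gamma
integral.
-/

open MeasureTheory Set Real Module

lemma lintegral_ofReal_eq_of_integral_eq_of_ne_zero {α : Type*} [MeasurableSpace α]
    {μ : Measure α} {f : α → ℝ} (hf : 0 ≤ᵐ[μ] f) {c : ℝ} (h : ∫ x, f x ∂μ = c) (hc : c ≠ 0) :
    ∫⁻ x, ENNReal.ofReal (f x) ∂μ = ENNReal.ofReal c := by
  subst h
  exact (ofReal_integral_eq_lintegral_ofReal (Integrable.of_integral_ne_zero hc) hf).symm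

lemma lintegral_rpow_mul_exp_neg_mul_Ioi {a r : ℝ} (ha : 0 < a) (hr : 0 < r) :
    ∫⁻ t in Ioi (0 : ℝ), ENNReal.ofReal (t ^ (a - 1) * exp (-(r * t))) =
      ENNReal.ofReal (Gamma a) * ENNReal.ofReal (r ^ (-a)) := by
  have hΓ := Gamma_pos_of_pos ha
  rw [← ENNReal.ofReal_mul hΓ.le, rpow_neg hr.le, ← inv_rpow hr.le, ← one_div, mul_comm]
  exact lintegral_ofReal_eq_of_integral_eq_of_ne_zero
    (ae_restrict_of_forall_mem measurableSet_Ioi fun t (ht : 0 < t) => by positivity)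
    (integral_rpow_mul_exp_neg_mul_Ioi ha hr) (by positivity)

section InnerProductSpace

variable {V : Type*} [NormedAddCommGroup V] [InnerProductSpace ℝ V] [FiniteDimensional ℝ V]
  [MeasurableSpace V] [BorelSpace V]

lemma lintegral_exp_neg_mul_sq_norm {b : ℝ} (hb : 0 < b) :
    ∫⁻ v : V, ENNReal.ofReal (exp (-b * ‖v‖ ^ 2)) =
      ENNReal.ofReal ((π / b) ^ ((finrank ℝ V : ℝ) / 2)) :=
  lintegral_ofReal_eq_of_integral_eq_of_ne_zero (ae_of_all _ fun _ => (exp_pos _).le)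
    (GaussianFourier.integral_rexp_neg_mul_sq_norm hb) (by positivity)

lemma lintegral_rpow_mul_exp_neg_add_mul_sq_norm_mul {a b t : ℝ} (hb : 0 < b) (ht : 0 < t)
    (s : ℝ) :
    ∫⁻ v : V, ENNReal.ofReal (t ^ (s - 1) * exp (-((a + b * ‖v‖ ^ 2) * t))) =
      ENNReal.ofReal ((π / b) ^ ((finrank ℝ V : ℝ) / 2)) *
        ENNReal.ofReal (t ^ (s - finrank ℝ V / 2 - 1) * exp (-(a * t))) := by
  set d : ℝ := (finrank ℝ V : ℝ) / 2
  have hsplit : ∀ v : V, t ^ (s - 1) * exp (-((a + b * ‖v‖ ^ 2) * t)) =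
      t ^ (s - 1) * exp (-(a * t)) * exp (-(b * t) * ‖v‖ ^ 2) := by
    intro v
    rw [mul_assoc, ← exp_add]
    ring_nf
  have hpow : (π / (b * t)) ^ d * t ^ (s - 1) = (π / b) ^ d * t ^ (s - d - 1) := by
    rw [div_mul_eq_div_div, div_rpow (by positivity) ht.le, sub_right_comm, rpow_sub ht (s - 1) d]
    ring
  simp_rw [hsplit, ENNReal.ofReal_mul (by positivity : 0 ≤ t ^ (s - 1) * exp (-(a * t)))]
  rw [lintegral_const_mul' _ _ ENNReal.ofReal_ne_top, lintegral_exp_neg_mul_sq_norm (by positivity),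
    ← ENNReal.ofReal_mul (by positivity), ← ENNReal.ofReal_mul (by positivity)]
  congr 1
  rw [← mul_assoc, mul_comm _ ((π / (b * t)) ^ d), ← mul_assoc, hpow, mul_assoc]

theorem integral_rpow_neg_add_mul_sq_norm {a b s : ℝ} (ha : 0 < a) (hb : 0 < b)
    (hs : (finrank ℝ V : ℝ) / 2 < s) :
    ∫ v : V, (a + b * ‖v‖ ^ 2) ^ (-s) =
      (π / b) ^ ((finrank ℝ V : ℝ) / 2) * Gamma (s - finrank ℝ V / 2) / Gamma s *
        a ^ ((finrank ℝ V : ℝ) / 2 - s) := by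
  set d : ℝ := (finrank ℝ V : ℝ) / 2
  have hs0 : 0 < s := lt_of_le_of_lt (by positivity) hs
  have hsd : 0 < s - d := sub_pos.mpr hs
  have hΓ : 0 < Gamma s := Gamma_pos_of_pos hs0
  have hlint : ENNReal.ofReal (Gamma s) * ∫⁻ v : V, ENNReal.ofReal ((a + b * ‖v‖ ^ 2) ^ (-s)) =
      ENNReal.ofReal (Gamma s) * ENNReal.ofReal
        ((π / b) ^ d * Gamma (s - d) / Gamma s * a ^ (d - s)) := by
    rw [← lintegral_const_mul' _ _ ENNReal.ofReal_ne_top]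
    calc ∫⁻ v : V, ENNReal.ofReal (Gamma s) * ENNReal.ofReal ((a + b * ‖v‖ ^ 2) ^ (-s))
        = ∫⁻ t in Ioi (0 : ℝ), ∫⁻ v : V,
            ENNReal.ofReal (t ^ (s - 1) * exp (-((a + b * ‖v‖ ^ 2) * t))) := by
          simp_rw [← lintegral_rpow_mul_exp_neg_mul_Ioi hs0 (by positivity : 0 < a + b * ‖_‖ ^ 2)]
          exact lintegral_lintegral_swap (by fun_prop)
      _ = ∫⁻ t in Ioi (0 : ℝ),
            ENNReal.ofReal ((π / b) ^ d) * ENNReal.ofReal (t ^ (s - d - 1) * exp (-(a * t))) :=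
          setLIntegral_congr_fun measurableSet_Ioi fun t ht =>
            lintegral_rpow_mul_exp_neg_add_mul_sq_norm_mul hb ht s
      _ = _ := by
          rw [lintegral_const_mul' _ _ ENNReal.ofReal_ne_top,
            lintegral_rpow_mul_exp_neg_mul_Ioi hsd ha, ← ENNReal.ofReal_mul (by positivity),
            ← ENNReal.ofReal_mul (by positivity), ← ENNReal.ofReal_mul hΓ.le]
          congr 1
          rw [neg_sub]
          field_simp
  rw [ENNReal.mul_right_inj (by simpa using hΓ) ENNReal.ofReal_ne_top] at hlint
  rw [integral_eq_lintegral_of_nonneg_ae (ae_of_all _ fun v => by positivity)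
    (Measurable.aestronglyMeasurable (by fun_prop)),
    hlint, ENNReal.toReal_ofReal (by have := Gamma_pos_of_pos hsd; positivity)]

end InnerProductSpace

theorem stmt9_general (k : ℕ) (n₀ : ℕ) (hn₀ : 1 ≤ n₀)
    (n : Fin (k + 1) → ℕ)
    (β : Fin (k + 1) → ℝ) (hβ : ∀ i, 0 < β i)
    (m nstar : ℕ) (hm : m = ∑ i, n i) (hns : nstar = n₀ + m) :
    ∀ t : Π i : Fin k, EuclideanSpace ℝ (Fin (n i.castSucc)),
      (∫ x : EuclideanSpace ℝ (Fin (n (Fin.last k))),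
          Real.Gamma ((nstar : ℝ) / 2) * (∏ i, (β i) ^ (-((n i : ℝ) / 2))) /
              (Real.Gamma ((n₀ : ℝ) / 2) * Real.pi ^ ((m : ℝ) / 2)) *
            (1 + ((∑ i : Fin k, (β i.castSucc)⁻¹ * ‖t i‖ ^ 2) +
                (β (Fin.last k))⁻¹ * ‖x‖ ^ 2)) ^ (-((nstar : ℝ) / 2))) =
        Real.Gamma (((nstar : ℝ) - n (Fin.last k)) / 2) *
            (∏ i : Fin k, (β i.castSucc) ^ (-((n i.castSucc : ℝ) / 2))) /
            (Real.Gamma ((n₀ : ℝ) / 2) * Real.pi ^ (((m : ℝ) - n (Fin.last k)) / 2)) *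
          (1 + ∑ i : Fin k, (β i.castSucc)⁻¹ * ‖t i‖ ^ 2) ^
            (-(((nstar : ℝ) - n (Fin.last k)) / 2)) := by
  intro t
  set d := n (Fin.last k)
  set S := ∑ i : Fin k, (β i.castSucc)⁻¹ * ‖t i‖ ^ 2
  have hβd := hβ (Fin.last k)
  have hS : 0 ≤ S := Finset.sum_nonneg fun i _ => by have := hβ i.castSucc; positivity
  have hd : (d : ℝ) < nstar := by
    have : d ≤ m := hm ▸ Finset.single_le_sum (fun i _ => Nat.zero_le (n i)) (Finset.mem_univ _)
    exact_mod_cast (show d < nstar by omega)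
  have hΓ : 0 < Gamma ((nstar : ℝ) / 2) := Gamma_pos_of_pos (by linarith [d.cast_nonneg (α := ℝ)])
  simp_rw [← add_assoc]
  rw [integral_const_mul, integral_rpow_neg_add_mul_sq_norm (by positivity) (by positivity)
      (by rw [finrank_euclideanSpace_fin]; linarith),
    finrank_euclideanSpace_fin, Fin.prod_univ_castSucc, div_inv_eq_mul, mul_rpow pi_pos.le hβd.le,
    show (m : ℝ) / 2 = (m - d) / 2 + d / 2 by ring, rpow_add pi_pos, rpow_neg hβd.le (d / 2),
    show (nstar : ℝ) / 2 - d / 2 = (nstar - d) / 2 by ring,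
    show (d : ℝ) / 2 - nstar / 2 = -((nstar - d) / 2) by ring]
  field_simp

/-- Marginals of the multivector variate t distribution: integrating the multivector
variate t density with parameters `(n₀, n₁, …, n_{k+1}; β₁, …, β_{k+1})` (here the
blocks are indexed by `Fin (k+1)`, with `k ≥ 1`, so that there are at least two
blocks) over its last block yields the multivector variate t density with parameters
`(n₀, n₁, …, n_k; β₁, …, β_k)` at the remaining blocks. -/
theorem stmt9 (k : ℕ) (hk : 1 ≤ k) (n₀ : ℕ) (hn₀ : 1 ≤ n₀)
    (n : Fin (k + 1) → ℕ) (hn : ∀ i, 1 ≤ n i)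
    (β : Fin (k + 1) → ℝ) (hβ : ∀ i, 0 < β i)
    (m nstar : ℕ) (hm : m = ∑ i, n i) (hns : nstar = n₀ + m) :
    ∀ t : Π i : Fin k, EuclideanSpace ℝ (Fin (n i.castSucc)),
      (∫ x : EuclideanSpace ℝ (Fin (n (Fin.last k))),
          Real.Gamma ((nstar : ℝ) / 2) * (∏ i, (β i) ^ (-((n i : ℝ) / 2))) /
              (Real.Gamma ((n₀ : ℝ) / 2) * Real.pi ^ ((m : ℝ) / 2)) *
            (1 + ((∑ i : Fin k, (β i.castSucc)⁻¹ * ‖t i‖ ^ 2) +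
                (β (Fin.last k))⁻¹ * ‖x‖ ^ 2)) ^ (-((nstar : ℝ) / 2))) =
        Real.Gamma (((nstar : ℝ) - n (Fin.last k)) / 2) *
            (∏ i : Fin k, (β i.castSucc) ^ (-((n i.castSucc : ℝ) / 2))) /
            (Real.Gamma ((n₀ : ℝ) / 2) * Real.pi ^ (((m : ℝ) - n (Fin.last k)) / 2)) *
          (1 + ∑ i : Fin k, (β i.castSucc)⁻¹ * ‖t i‖ ^ 2) ^
            (-(((nstar : ℝ) - n (Fin.last k)) / 2)) :=
  stmt9_general k n₀ hn₀ n β hβ m nstar hm hns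
end

section
/- Let k ≥ 1, let n₀, n₁, …, n_k ≥ 1 be integers with n* = n₀ + n₁ + ⋯ + n_k and m = n₁ + ⋯ + n_k, let σ₀, σ₁, …, σ_k > 0, and let h : [0, ∞) → [0, ∞] be measurable with ∫₀^∞ z^{n*/2 - 1} h(z) dz = Γ(n*/2)/π^{n*/2}. Let μ be the measure on ℝ^{n₀} × ℝ^{n₁} × ⋯ × ℝ^{n_k} with density (x₀, x₁, …, x_k) ↦ (∏_{i=0}^k σ_i^{-n_i}) · h(Σ_{i=0}^k σ_i^{-2} ‖x_i‖²) with respect to Lebesgue measure (a probability measure), and let T(x₀, x₁, …, x_k) = (‖x₀‖^{-1} x₁, …, ‖x₀‖^{-1} x_k), defined for x₀ ≠ 0. Then the pushforward measure T_*μ on ℝ^{n₁} × ⋯ × ℝ^{n_k} has density (t₁, …, t_k) ↦ Γ(n*/2) (∏_{i=1}^k β_i^{-n_i/2}) / (Γ(n₀/2) π^{m/2}) · (1 + Σ_{i=1}^k β_i^{-1} ‖t_i‖²)^{-n*/2} with respect to Lebesgue measure, where β_i = σ_i²/σ₀². -/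
open MeasureTheory
open scoped ENNReal

/-!
Substituting `x = ‖x₀‖ • t` in the fibre over `x₀ ≠ 0` and exchanging the integrals shows that
the image of a density `f(x₀, x)` under `(x₀, x) ↦ ‖x₀‖⁻¹ • x` has density
`t ↦ ∫ ‖x₀‖^m f(x₀, ‖x₀‖ • t) dx₀`. For the elliptical density the quadratic form at
`(x₀, ‖x₀‖ • t)` equals `σ₀⁻² Q(t) ‖x₀‖²` with `Q(t) = 1 + Σ βᵢ⁻¹ ‖tᵢ‖²`, so this is a radial
integral over `ℝ^{n₀}`. Polar coordinates and the substitution `z = a r²` turn it into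
`π^{n₀/2} / Γ(n₀/2) · a^{-n*/2}` times the normalising integral `∫ z^{n*/2-1} h(z) dz` of `h`,
with `a = σ₀⁻² Q(t)`.
-/

open Set Metric Module Real

section NormedSpace

variable {E : Type*} [NormedAddCommGroup E] [NormedSpace ℝ E] [MeasurableSpace E] [BorelSpace E]
  [FiniteDimensional ℝ E]

lemma lintegral_fun_norm_addHaar [Nontrivial E] (μ : Measure E) [μ.IsAddHaarMeasure]
    {f : ℝ → ℝ≥0∞} (hf : Measurable f) :
    ∫⁻ x, f ‖x‖ ∂μ = finrank ℝ E * μ (ball 0 1) *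
      ∫⁻ r in Ioi (0 : ℝ), ENNReal.ofReal (r ^ (finrank ℝ E - 1)) * f r := by
  calc ∫⁻ x, f ‖x‖ ∂μ
      = ∫⁻ x : ({0}ᶜ : Set E), f ‖(x : E)‖ ∂(μ.comap (↑)) := by
        rw [lintegral_subtype_comap (measurableSet_singleton _).compl fun x => f ‖x‖,
          restrict_compl_singleton]
    _ = ∫⁻ x : ({0}ᶜ : Set E), (fun p : sphere (0 : E) 1 × Ioi (0 : ℝ) => f p.2)
          (homeomorphUnitSphereProd E x) ∂(μ.comap (↑)) := by
        simp
    _ = ∫⁻ p : sphere (0 : E) 1 × Ioi (0 : ℝ), f p.2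
          ∂(μ.toSphere.prod (Measure.volumeIoiPow (finrank ℝ E - 1))) :=
        μ.measurePreserving_homeomorphUnitSphereProd.lintegral_comp
          (hf.comp (measurable_subtype_coe.comp measurable_snd))
    _ = μ.toSphere univ *
          ∫⁻ r : Ioi (0 : ℝ), f r ∂(Measure.volumeIoiPow (finrank ℝ E - 1)) := by
        rw [← lintegral_map (f := fun r : Ioi (0 : ℝ) => f r) (by fun_prop) measurable_snd,
          Measure.map_snd_prod, lintegral_smul_measure, smul_eq_mul]
    _ = _ := by
        rw [Measure.toSphere_apply_univ,
          ← lintegral_subtype_comap measurableSet_Ioi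
            (fun r : ℝ => ENNReal.ofReal (r ^ (finrank ℝ E - 1)) * f r),
          Measure.volumeIoiPow,
          lintegral_withDensity_eq_lintegral_mul _ (by fun_prop) (by fun_prop)]
        rfl

lemma lintegral_comp_inv_smul (μ : Measure E) [μ.IsAddHaarMeasure] {r : ℝ} (hr : r ≠ 0)
    {g : E → ℝ≥0∞} (hg : Measurable g) :
    ∫⁻ y, g (r⁻¹ • y) ∂μ = ENNReal.ofReal (|r| ^ finrank ℝ E) * ∫⁻ t, g t ∂μ := by
  rw [← lintegral_map hg (measurable_const_smul _), Measure.map_addHaar_smul μ (inv_ne_zero hr),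
    lintegral_smul_measure, inv_pow, inv_inv, abs_pow, smul_eq_mul]

end NormedSpace

section Ratio

variable {E F : Type*} [NormedAddCommGroup E] [NormedSpace ℝ E] [MeasurableSpace E]
  [BorelSpace E] [FiniteDimensional ℝ E] [NormedAddCommGroup F] [NormedSpace ℝ F]
  [MeasurableSpace F] [BorelSpace F] [FiniteDimensional ℝ F]
  (μ : Measure E) [μ.IsAddHaarMeasure] (ν : Measure F) [ν.IsAddHaarMeasure]

lemma map_inv_norm_smul_prod_withDensity [Nontrivial E] {f : E × F → ℝ≥0∞} (hf : Measurable f) :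
    ((μ.prod ν).withDensity f).map (fun p => ‖p.1‖⁻¹ • p.2) =
      ν.withDensity fun t => ∫⁻ x, ENNReal.ofReal (‖x‖ ^ finrank ℝ F) * f (x, ‖x‖ • t) ∂μ := by
  have hG : Measurable fun q : E × F =>
      ENNReal.ofReal (‖q.1‖ ^ finrank ℝ F) * f (q.1, ‖q.1‖ • q.2) := by
    fun_prop
  refine Measure.ext_of_lintegral _ fun g hg => ?_
  rw [lintegral_map hg (by fun_prop), lintegral_withDensity_eq_lintegral_mul _ hf (by fun_prop),
    lintegral_withDensity_eq_lintegral_mul _ hG.lintegral_prod_left' hg,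
    lintegral_prod _ (by fun_prop)]
  have hinner : ∀ᵐ x ∂μ, ∫⁻ y, f (x, y) * g (‖x‖⁻¹ • y) ∂ν =
      ∫⁻ t, ENNReal.ofReal (‖x‖ ^ finrank ℝ F) * f (x, ‖x‖ • t) * g t ∂ν := by
    filter_upwards [measure_singleton (μ := μ) 0 |> compl_mem_ae_iff.2] with x (hx : x ≠ 0)
    have hx' : ‖x‖ ≠ 0 := norm_ne_zero_iff.2 hx
    calc ∫⁻ y, f (x, y) * g (‖x‖⁻¹ • y) ∂ν
        = ∫⁻ y, (fun t => f (x, ‖x‖ • t) * g t) (‖x‖⁻¹ • y) ∂ν := by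
          simp only [smul_inv_smul₀ hx']
      _ = ENNReal.ofReal (|‖x‖| ^ finrank ℝ F) * ∫⁻ t, f (x, ‖x‖ • t) * g t ∂ν :=
          lintegral_comp_inv_smul ν hx'
            ((hf.comp (measurable_const.prodMk (measurable_const_smul _))).mul hg)
      _ = _ := by
          rw [abs_norm, ← lintegral_const_mul' _ _ ENNReal.ofReal_ne_top]
          simp only [mul_assoc]
  simp only [Pi.mul_apply]
  rw [lintegral_congr_ae hinner, lintegral_lintegral_swap (by fun_prop)]
  exact lintegral_congr fun t =>
    lintegral_mul_const _ (hG.comp (measurable_id.prodMk measurable_const))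

end Ratio

lemma lintegral_Ioi_rpow_mul_comp_mul_sq {a : ℝ} (ha : 0 < a) (s : ℝ) (f : ℝ → ℝ≥0∞) :
    ∫⁻ r in Ioi (0 : ℝ), ENNReal.ofReal (r ^ (2 * s - 1)) * f (a * r ^ 2) =
      ENNReal.ofReal (a ^ (-s) / 2) * ∫⁻ z in Ioi (0 : ℝ), ENNReal.ofReal (z ^ (s - 1)) * f z := by
  have himage : (fun r : ℝ => a * r ^ 2) '' Ioi 0 = Ioi 0 := by
    refine (image_subset_iff.2 fun r (hr : 0 < r) => show 0 < a * r ^ 2 by positivity).antisymm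
      fun z (hz : 0 < z) => ⟨√(z / a), sqrt_pos.2 (div_pos hz ha), ?_⟩
    simp only [sq_sqrt (div_pos hz ha).le, mul_div_cancel₀ _ ha.ne']
  have hderiv : ∀ r ∈ Ioi (0 : ℝ),
      HasDerivWithinAt (fun r : ℝ => a * r ^ 2) (a * (2 * r)) (Ioi 0) r := fun r _ => by
    simpa using ((hasDerivAt_pow 2 r).const_mul a).hasDerivWithinAt
  have hinj : InjOn (fun r : ℝ => a * r ^ 2) (Ioi 0) := fun x (hx : 0 < x) y (hy : 0 < y) hxy =>
    (sq_eq_sq₀ hx.le hy.le).1 (mul_left_cancel₀ ha.ne' hxy)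
  conv_rhs => rw [← himage,
    lintegral_image_eq_lintegral_abs_deriv_mul measurableSet_Ioi hderiv hinj,
    ← lintegral_const_mul' _ _ ENNReal.ofReal_ne_top]
  refine setLIntegral_congr_fun measurableSet_Ioi fun r (hr : 0 < r) => ?_
  rw [← mul_assoc, ← mul_assoc, ← ENNReal.ofReal_mul (by positivity),
    ← ENNReal.ofReal_mul (by positivity)]
  congr 2
  rw [abs_of_pos (by positivity), mul_rpow ha.le (by positivity), ← rpow_natCast r 2,
    ← rpow_mul hr.le]
  calc r ^ (2 * s - 1)
      = (a ^ (-s) * a ^ (1 : ℝ) * a ^ (s - 1)) * (r ^ (1 : ℝ) * r ^ ((2 : ℕ) * (s - 1))) := by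
        rw [← rpow_add ha, ← rpow_add ha, ← rpow_add hr, show -s + 1 + (s - 1) = 0 by ring,
          rpow_zero, one_mul]
        congr 1
        push_cast
        ring
    _ = _ := by rw [rpow_one, rpow_one]; ring

section InnerProductSpace

variable {E : Type*} [NormedAddCommGroup E] [InnerProductSpace ℝ E] [MeasurableSpace E]
  [BorelSpace E] [FiniteDimensional ℝ E] [Nontrivial E]

lemma finrank_mul_volume_ball_one :
    (finrank ℝ E : ℝ≥0∞) * volume (ball (0 : E) 1) =
      ENNReal.ofReal (2 * π ^ ((finrank ℝ E : ℝ) / 2) / Gamma ((finrank ℝ E : ℝ) / 2)) := by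
  have hd : (0 : ℝ) < finrank ℝ E := Nat.cast_pos.2 finrank_pos
  rw [InnerProductSpace.volume_ball, ENNReal.ofReal_one, one_pow, one_mul,
    ← ENNReal.ofReal_natCast, ← ENNReal.ofReal_mul hd.le, Gamma_add_one (by positivity),
    sqrt_eq_rpow, ← rpow_natCast, ← rpow_mul pi_pos.le]
  have hΓ : Gamma ((finrank ℝ E : ℝ) / 2) ≠ 0 := (Gamma_pos_of_pos (by positivity)).ne'
  congr 1
  field_simp

lemma lintegral_norm_pow_mul_comp_mul_norm_sq (M : ℕ) {a : ℝ} (ha : 0 < a) {f : ℝ → ℝ≥0∞}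
    (hf : Measurable f) :
    ∫⁻ x : E, ENNReal.ofReal (‖x‖ ^ M) * f (a * ‖x‖ ^ 2) =
      ENNReal.ofReal (π ^ ((finrank ℝ E : ℝ) / 2) / Gamma ((finrank ℝ E : ℝ) / 2) *
          a ^ (-(((finrank ℝ E + M : ℕ) : ℝ) / 2))) *
        ∫⁻ z in Ioi (0 : ℝ), ENNReal.ofReal (z ^ (((finrank ℝ E + M : ℕ) : ℝ) / 2 - 1)) * f z := by
  set s : ℝ := ((finrank ℝ E + M : ℕ) : ℝ) / 2
  have hpow : ∀ r ∈ Ioi (0 : ℝ), ENNReal.ofReal (r ^ (finrank ℝ E - 1)) *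
      (ENNReal.ofReal (r ^ M) * f (a * r ^ 2)) =
        ENNReal.ofReal (r ^ (2 * s - 1)) * f (a * r ^ 2) := by
    intro r (hr : 0 < r)
    rw [← mul_assoc, ← ENNReal.ofReal_mul (by positivity), ← pow_add, ← rpow_natCast]
    congr 3
    have := finrank_pos (R := ℝ) (M := E)
    push_cast [s, Nat.cast_sub this]
    ring
  rw [lintegral_fun_norm_addHaar volume (f := fun r => ENNReal.ofReal (r ^ M) * f (a * r ^ 2))
    (by fun_prop), setLIntegral_congr_fun measurableSet_Ioi hpow,
    lintegral_Ioi_rpow_mul_comp_mul_sq ha, ← mul_assoc, finrank_mul_volume_ball_one,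
    ← ENNReal.ofReal_mul (by positivity)]
  congr 2
  ring

end InnerProductSpace

lemma sq_rpow_neg_half {b : ℝ} (hb : 0 ≤ b) (N : ℕ) : (b ^ 2) ^ (-((N : ℝ) / 2)) = (b ^ N)⁻¹ := by
  rw [← rpow_natCast b 2, ← rpow_mul hb, ← rpow_natCast, ← rpow_neg hb]
  congr 1
  push_cast
  ring

lemma multivectorT_normalizing_const_eq {k n₀ m nstar : ℕ} {n : Fin k → ℕ} (hm : m = ∑ i, n i)
    (hns : nstar = n₀ + m) {σ₀ : ℝ} {σ : Fin k → ℝ} (hσ₀ : 0 < σ₀) (hσ : ∀ i, 0 < σ i) {Q : ℝ}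
    (hQ : 0 < Q) :
    (σ₀ ^ n₀ * ∏ i, σ i ^ n i)⁻¹ *
        (π ^ ((n₀ : ℝ) / 2) / Gamma ((n₀ : ℝ) / 2) * ((σ₀ ^ 2)⁻¹ * Q) ^ (-((nstar : ℝ) / 2)) *
          (Gamma ((nstar : ℝ) / 2) / π ^ ((nstar : ℝ) / 2))) =
      Gamma ((nstar : ℝ) / 2) * (∏ i, (σ i ^ 2 / σ₀ ^ 2) ^ (-((n i : ℝ) / 2))) /
        (Gamma ((n₀ : ℝ) / 2) * π ^ ((m : ℝ) / 2)) * Q ^ (-((nstar : ℝ) / 2)) := by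
  have hσ₀pow :
      ((σ₀ ^ 2)⁻¹ * Q) ^ (-((nstar : ℝ) / 2)) = σ₀ ^ nstar * Q ^ (-((nstar : ℝ) / 2)) := by
    rw [mul_rpow (by positivity) hQ.le, inv_rpow (by positivity), sq_rpow_neg_half hσ₀.le, inv_inv]
  have hβ : ∏ i, (σ i ^ 2 / σ₀ ^ 2) ^ (-((n i : ℝ) / 2)) = σ₀ ^ m / ∏ i, σ i ^ n i := by
    simp_rw [← div_pow, fun i => sq_rpow_neg_half (div_pos (hσ i) hσ₀).le (n i), div_pow, inv_div]
    rw [Finset.prod_div_distrib, Finset.prod_pow_eq_pow_sum, hm]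
  have hπ : π ^ ((nstar : ℝ) / 2) = π ^ ((n₀ : ℝ) / 2) * π ^ ((m : ℝ) / 2) := by
    rw [← rpow_add pi_pos, hns]
    push_cast
    ring_nf
  have : 0 < ∏ i, σ i ^ n i := Finset.prod_pos fun i _ => pow_pos (hσ i) _
  rw [hσ₀pow, hβ, hπ, hns, pow_add]
  field_simp

lemma inv_sq_mul_sq_add_sum_mul_sq {ι : Type*} [Fintype ι] {σ₀ : ℝ} (hσ₀ : σ₀ ≠ 0) {σ : ι → ℝ}
    (hσ : ∀ i, σ i ≠ 0) (r : ℝ) (u : ι → ℝ) :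
    (σ₀ ^ 2)⁻¹ * r ^ 2 + ∑ i, (σ i ^ 2)⁻¹ * (r * u i) ^ 2 =
      (σ₀ ^ 2)⁻¹ * (1 + ∑ i, (σ i ^ 2 / σ₀ ^ 2)⁻¹ * u i ^ 2) * r ^ 2 := by
  simp only [mul_add, add_mul, Finset.mul_sum, Finset.sum_mul]
  congr 1
  · ring
  · refine Finset.sum_congr rfl fun i _ => ?_
    have := hσ i
    field_simp

theorem stmt18_general (k : ℕ) (n₀ : ℕ) (hn₀ : 1 ≤ n₀)
    (n : Fin k → ℕ)
    (σ₀ : ℝ) (σ : Fin k → ℝ) (hσ₀ : 0 < σ₀) (hσ : ∀ i, 0 < σ i)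
    (m nstar : ℕ) (hm : m = ∑ i, n i) (hns : nstar = n₀ + m)
    (h : ℝ → ℝ≥0∞) (hh : Measurable h)
    (hnorm : ∫⁻ z in Set.Ioi (0 : ℝ),
        ENNReal.ofReal (z ^ ((nstar : ℝ) / 2 - 1)) * h z =
      ENNReal.ofReal (Real.Gamma ((nstar : ℝ) / 2) / Real.pi ^ ((nstar : ℝ) / 2)))
    (μ : Measure (EuclideanSpace ℝ (Fin n₀) × Π i, EuclideanSpace ℝ (Fin (n i))))
    (hμ : μ = volume.withDensity (fun p =>
      ENNReal.ofReal ((σ₀ ^ n₀ * ∏ i, σ i ^ (n i))⁻¹) *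
        h ((σ₀ ^ 2)⁻¹ * ‖p.1‖ ^ 2 + ∑ i, ((σ i) ^ 2)⁻¹ * ‖p.2 i‖ ^ 2)))
    (T : (EuclideanSpace ℝ (Fin n₀) × Π i, EuclideanSpace ℝ (Fin (n i))) →
      (Π i, EuclideanSpace ℝ (Fin (n i))))
    (hT : ∀ p, p.1 ≠ 0 → T p = fun i => ‖p.1‖⁻¹ • p.2 i) :
    μ.map T = volume.withDensity (fun t =>
      ENNReal.ofReal (Real.Gamma ((nstar : ℝ) / 2) *
          (∏ i, (σ i ^ 2 / σ₀ ^ 2) ^ (-((n i : ℝ) / 2))) /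
          (Real.Gamma ((n₀ : ℝ) / 2) * Real.pi ^ ((m : ℝ) / 2)) *
        (1 + ∑ i, (σ i ^ 2 / σ₀ ^ 2)⁻¹ * ‖t i‖ ^ 2) ^ (-((nstar : ℝ) / 2)))) := by
  have : Nonempty (Fin n₀) := ⟨⟨0, hn₀⟩⟩
  have hTae : T =ᵐ[μ] fun p => ‖p.1‖⁻¹ • p.2 := by
    rw [hμ, Measure.volume_eq_prod]
    refine (withDensity_absolutelyContinuous _ _).ae_le ?_
    filter_upwards [Measure.quasiMeasurePreserving_fst.ae
      (compl_mem_ae_iff.2 (measure_singleton 0))] with p hp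
    exact hT p hp
  rw [Measure.map_congr hTae, hμ, Measure.volume_eq_prod,
    map_inv_norm_smul_prod_withDensity _ _ (by fun_prop)]
  congr 1 with t
  have hc : 0 < σ₀ ^ n₀ * ∏ i, σ i ^ n i :=
    mul_pos (pow_pos hσ₀ _) (Finset.prod_pos fun i _ => pow_pos (hσ i) _)
  set Q := 1 + ∑ i, (σ i ^ 2 / σ₀ ^ 2)⁻¹ * ‖t i‖ ^ 2
  have hQ : 0 < Q := by positivity
  have hfin : finrank ℝ (Π i, EuclideanSpace ℝ (Fin (n i))) = m := by
    simp [Module.finrank_pi_fintype, hm]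
  simp only [Pi.smul_apply, norm_smul, norm_norm,
    inv_sq_mul_sq_add_sum_mul_sq hσ₀.ne' fun i => (hσ i).ne', hfin,
    mul_left_comm (ENNReal.ofReal (_ ^ m))]
  rw [lintegral_const_mul' _ _ ENNReal.ofReal_ne_top,
    lintegral_norm_pow_mul_comp_mul_norm_sq m (by positivity) hh, finrank_euclideanSpace_fin,
    ← hns, hnorm, ← ENNReal.ofReal_mul (by positivity), ← ENNReal.ofReal_mul (by positivity),
    multivectorT_normalizing_const_eq hm hns hσ₀ hσ hQ]

/-- Derivation of the multivector variate t distribution: if `μ` is the probability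
measure on `ℝ^{n₀} × ℝ^{n₁} × ⋯ × ℝ^{n_k}` with the elliptical density
`(∏ σᵢ^{-nᵢ}) h(Σ σᵢ^{-2}‖xᵢ‖²)` and `T(x₀,…,x_k) = (‖x₀‖⁻¹ x₁, …, ‖x₀‖⁻¹ x_k)`
(defined for `x₀ ≠ 0`), then the pushforward `T⋆μ` has the multivector variate t
density with parameters `βᵢ = σᵢ²/σ₀²`. -/
theorem stmt18 (k : ℕ) (hk : 1 ≤ k) (n₀ : ℕ) (hn₀ : 1 ≤ n₀)
    (n : Fin k → ℕ) (hn : ∀ i, 1 ≤ n i)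
    (σ₀ : ℝ) (σ : Fin k → ℝ) (hσ₀ : 0 < σ₀) (hσ : ∀ i, 0 < σ i)
    (m nstar : ℕ) (hm : m = ∑ i, n i) (hns : nstar = n₀ + m)
    (h : ℝ → ℝ≥0∞) (hh : Measurable h)
    (hnorm : ∫⁻ z in Set.Ioi (0 : ℝ),
        ENNReal.ofReal (z ^ ((nstar : ℝ) / 2 - 1)) * h z =
      ENNReal.ofReal (Real.Gamma ((nstar : ℝ) / 2) / Real.pi ^ ((nstar : ℝ) / 2)))
    (μ : Measure (EuclideanSpace ℝ (Fin n₀) × Π i, EuclideanSpace ℝ (Fin (n i))))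
    (hμ : μ = volume.withDensity (fun p =>
      ENNReal.ofReal ((σ₀ ^ n₀ * ∏ i, σ i ^ (n i))⁻¹) *
        h ((σ₀ ^ 2)⁻¹ * ‖p.1‖ ^ 2 + ∑ i, ((σ i) ^ 2)⁻¹ * ‖p.2 i‖ ^ 2)))
    (T : (EuclideanSpace ℝ (Fin n₀) × Π i, EuclideanSpace ℝ (Fin (n i))) →
      (Π i, EuclideanSpace ℝ (Fin (n i))))
    (hT : ∀ p, p.1 ≠ 0 → T p = fun i => ‖p.1‖⁻¹ • p.2 i) :
    μ.map T = volume.withDensity (fun t =>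
      ENNReal.ofReal (Real.Gamma ((nstar : ℝ) / 2) *
          (∏ i, (σ i ^ 2 / σ₀ ^ 2) ^ (-((n i : ℝ) / 2))) /
          (Real.Gamma ((n₀ : ℝ) / 2) * Real.pi ^ ((m : ℝ) / 2)) *
        (1 + ∑ i, (σ i ^ 2 / σ₀ ^ 2)⁻¹ * ‖t i‖ ^ 2) ^ (-((nstar : ℝ) / 2)))) :=
  stmt18_general k n₀ hn₀ n σ₀ σ hσ₀ hσ m nstar hm hns h hh hnorm μ hμ T hT
end
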